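/- arXiv:1304.6449 — 7 statements merged into one kernel-verified Lean document; each statement's English description precedes it below -/
import Mathlib

section
/- Under the change of variables W = 1/(-ω + n ψ'/ψ), X = √n W ψ'/ψ, Y = √(n(n-1)) W/ψ, and new independent variable y with dy = dx/W, the soliton ODE system n ψ'' - ψ ω' = λψ, ψψ'' + (n-1)(ψ')² - (n-1) - ψψ'ω = λψ² transforms into the first-order system W' = W(X² - λW²), X' = X³ - X + Y²/√n + λ(√n - X)W², Y' = Y(X² - X/√n - λW²), where ' = d/dy. -/
/-!
Write `p = ψ'/ψ` and `D = -ω + n p`, so `W = 1/D`. Solving the second equation for `ψ''/ψ` gives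
`p' = λ + (n-1)/ψ² - n p² + p ω`, and then the first equation makes `ψ''` cancel in
`D' = -ω' + n p' = λ - n p²`. Since `d/dy = W d/dx` and `W D = 1`, the triple `(W, p, ψ)` satisfies
`W' = W³ (n p² - λ)`, `p' = λ W + (n-1) W/ψ² - p`, `ψ' = W p ψ` in `y`, and the system for
`X = √n W p`, `Y = √(n(n-1)) W/ψ` follows from the product and quotient rules.
-/

open Real

theorem hasDerivAt_logDeriv {f : ℝ → ℝ} {t : ℝ} (hf : DifferentiableAt ℝ f t)
    (hf' : DifferentiableAt ℝ (deriv f) t) (h0 : f t ≠ 0) :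
    HasDerivAt (logDeriv f) (deriv (deriv f) t / f t - logDeriv f t ^ 2) t := by
  refine (hf'.hasDerivAt.div hf.hasDerivAt h0).congr_deriv ?_
  rw [logDeriv_apply]
  field_simp

section SolitonSystem

variable {n : ℕ} {lam : ℝ} {ψ ω : ℝ → ℝ} {t : ℝ}

theorem soliton_hasDerivAt_logDeriv (hψ : DifferentiableAt ℝ ψ t)
    (hψ' : DifferentiableAt ℝ (deriv ψ) t) (h0 : ψ t ≠ 0)
    (hode2 : ψ t * deriv (deriv ψ) t + ((n : ℝ) - 1) * (deriv ψ t) ^ 2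
        - ((n : ℝ) - 1) - ψ t * deriv ψ t * ω t = lam * (ψ t) ^ 2) :
    HasDerivAt (logDeriv ψ)
      (lam + (n - 1) / ψ t ^ 2 - n * logDeriv ψ t ^ 2 + logDeriv ψ t * ω t) t := by
  refine (hasDerivAt_logDeriv hψ hψ' h0).congr_deriv ?_
  rw [logDeriv_apply]
  field_simp
  linear_combination hode2

theorem soliton_hasDerivAt_denom (hψ : DifferentiableAt ℝ ψ t)
    (hψ' : DifferentiableAt ℝ (deriv ψ) t) (hω : DifferentiableAt ℝ ω t) (h0 : ψ t ≠ 0)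
    (hode1 : (n : ℝ) * deriv (deriv ψ) t - ψ t * deriv ω t = lam * ψ t)
    (hode2 : ψ t * deriv (deriv ψ) t + ((n : ℝ) - 1) * (deriv ψ t) ^ 2
        - ((n : ℝ) - 1) - ψ t * deriv ψ t * ω t = lam * (ψ t) ^ 2) :
    HasDerivAt (fun s => -ω s + n * logDeriv ψ s) (lam - n * logDeriv ψ t ^ 2) t := by
  refine (hω.hasDerivAt.neg.add
    ((soliton_hasDerivAt_logDeriv hψ hψ' h0 hode2).const_mul (n : ℝ))).congr_deriv ?_
  rw [logDeriv_apply]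
  field_simp
  linear_combination ψ t * hode1 - (n : ℝ) * hode2

theorem soliton_hasDerivAt_reparam {x W : ℝ → ℝ} {y : ℝ}
    (hψ : DifferentiableAt ℝ ψ (x y)) (hψ' : DifferentiableAt ℝ (deriv ψ) (x y))
    (hω : DifferentiableAt ℝ ω (x y)) (h0 : ψ (x y) ≠ 0)
    (hden : -ω (x y) + n * logDeriv ψ (x y) ≠ 0)
    (hode1 : (n : ℝ) * deriv (deriv ψ) (x y) - ψ (x y) * deriv ω (x y) = lam * ψ (x y))
    (hode2 : ψ (x y) * deriv (deriv ψ) (x y) + ((n : ℝ) - 1) * (deriv ψ (x y)) ^ 2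
        - ((n : ℝ) - 1) - ψ (x y) * deriv ψ (x y) * ω (x y) = lam * (ψ (x y)) ^ 2)
    (hW : ∀ y, W y = 1 / (-ω (x y) + n * logDeriv ψ (x y))) (hx : HasDerivAt x (W y) y) :
    HasDerivAt W (W y ^ 3 * (n * logDeriv ψ (x y) ^ 2 - lam)) y ∧
      HasDerivAt (logDeriv ψ ∘ x)
        (lam * W y + (n - 1) * W y / ψ (x y) ^ 2 - logDeriv ψ (x y)) y ∧
      HasDerivAt (ψ ∘ x) (W y * logDeriv ψ (x y) * ψ (x y)) y := by
  obtain rfl : W = fun y => 1 / (-ω (x y) + n * logDeriv ψ (x y)) := funext hW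
  refine ⟨?_, ?_, ?_⟩
  · refine (((soliton_hasDerivAt_denom hψ hψ' hω h0 hode1 hode2).inv hden).comp y hx
      |>.congr_deriv ?_).congr_of_eventuallyEq ?_
    · field_simp
      ring
    · exact .of_forall fun z => by simp
  · refine ((soliton_hasDerivAt_logDeriv hψ hψ' h0 hode2).comp y hx).congr_deriv ?_
    field_simp
    ring
  · refine (hψ.hasDerivAt.comp y hx).congr_deriv ?_
    rw [logDeriv_apply]
    field_simp

theorem soliton_hasDerivAt_XY {W P Ψ X Y : ℝ → ℝ} {y : ℝ} (hn : 1 ≤ n) (hΨ0 : Ψ y ≠ 0)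
    (hW : HasDerivAt W (W y ^ 3 * (n * P y ^ 2 - lam)) y)
    (hP : HasDerivAt P (lam * W y + (n - 1) * W y / Ψ y ^ 2 - P y) y)
    (hΨ : HasDerivAt Ψ (W y * P y * Ψ y) y)
    (hX : ∀ y, X y = √n * W y * P y) (hY : ∀ y, Y y = √(n * (n - 1)) * W y / Ψ y) :
    HasDerivAt W (W y * ((X y) ^ 2 - lam * (W y) ^ 2)) y ∧
      HasDerivAt X ((X y) ^ 3 - X y + (Y y) ^ 2 / √n + lam * (√n - X y) * (W y) ^ 2) y ∧
      HasDerivAt Y (Y y * ((X y) ^ 2 - X y / √n - lam * (W y) ^ 2)) y := by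
  have hn' : (1 : ℝ) ≤ n := by exact_mod_cast hn
  have hsn : √n ^ 2 = (n : ℝ) := sq_sqrt (by positivity)
  have hsn0 : √n ≠ 0 := by positivity
  have hc : √(n * (n - 1)) ^ 2 = (n : ℝ) * (n - 1) := sq_sqrt (by nlinarith)
  obtain rfl : X = fun y => √n * W y * P y := funext hX
  obtain rfl : Y = fun y => √(n * (n - 1)) * W y / Ψ y := funext hY
  refine ⟨hW.congr_deriv ?_, ((hW.const_mul √n).mul hP).congr_deriv ?_,
    ((hW.const_mul _).div hΨ hΨ0).congr_deriv ?_⟩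
  · linear_combination (-(W y ^ 3 * P y ^ 2)) * hsn
  · have hY2 : (√(n * (n - 1)) * W y / Ψ y) ^ 2 / √n = √n * (n - 1) * (W y / Ψ y) ^ 2 := by
      rw [show (√(n * (n - 1)) * W y / Ψ y) ^ 2 / √n
          = √(n * (n - 1)) ^ 2 / √n * (W y / Ψ y) ^ 2 by ring, hc, mul_div_right_comm, div_sqrt]
    rw [hY2]
    linear_combination (-(√n * W y ^ 3 * P y ^ 3)) * hsn
  · have hXn : √n * W y * P y / √n = W y * P y := by field_simp
    rw [hXn]
    field_simp
    linear_combination (-(√(n * (n - 1)) * W y ^ 3 * P y ^ 2)) * hsn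

end SolitonSystem

/-- **Change of variables for the soliton ODE.**  Suppose `ψ, ω` solve the soliton system
`n ψ'' - ψ ω' = λψ` and `ψψ'' + (n-1)(ψ')² - (n-1) - ψψ'ω = λψ²`, with `ψ > 0` and
`-ω + n ψ'/ψ ≠ 0`.  Let `x(y)` be the reparametrization with `dx/dy = W(y)` where
`W = 1/(-ω + n ψ'/ψ)`, `X = √n W ψ'/ψ`, `Y = √(n(n-1)) W/ψ` (all evaluated at `x(y)`).
Then `(W, X, Y)` solves `W' = W(X² - λW²)`, `X' = X³ - X + Y²/√n + λ(√n - X)W²`,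
`Y' = Y(X² - X/√n - λW²)` where `' = d/dy`. -/
theorem soliton_ode_change_of_variables
    (n : ℕ) (hn : 2 ≤ n) (lam : ℝ)
    (ψ ω : ℝ → ℝ) (x W X Y : ℝ → ℝ)
    (hψsmooth : ContDiff ℝ 2 ψ) (hωsmooth : ContDiff ℝ 1 ω)
    (hψ : ∀ t, 0 < ψ t)
    (hden : ∀ t, -ω t + (n : ℝ) * (deriv ψ t / ψ t) ≠ 0)
    (hode1 : ∀ t, (n : ℝ) * deriv (deriv ψ) t - ψ t * deriv ω t = lam * ψ t)
    (hode2 : ∀ t, ψ t * deriv (deriv ψ) t + ((n : ℝ) - 1) * (deriv ψ t) ^ 2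
        - ((n : ℝ) - 1) - ψ t * deriv ψ t * ω t = lam * (ψ t) ^ 2)
    (hW : ∀ y, W y = 1 / (-ω (x y) + (n : ℝ) * (deriv ψ (x y) / ψ (x y))))
    (hX : ∀ y, X y = Real.sqrt n * W y * (deriv ψ (x y) / ψ (x y)))
    (hY : ∀ y, Y y = Real.sqrt ((n : ℝ) * ((n : ℝ) - 1)) * W y / ψ (x y))
    (hx : ∀ y, HasDerivAt x (W y) y) :
    ∀ y,
      HasDerivAt W (W y * ((X y) ^ 2 - lam * (W y) ^ 2)) y ∧
      HasDerivAt X ((X y) ^ 3 - X y + (Y y) ^ 2 / Real.sqrt n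
          + lam * (Real.sqrt n - X y) * (W y) ^ 2) y ∧
      HasDerivAt Y (Y y * ((X y) ^ 2 - X y / Real.sqrt n - lam * (W y) ^ 2)) y := by
  have hψd : Differentiable ℝ ψ := hψsmooth.differentiable (by norm_num)
  have hψ'd : Differentiable ℝ (deriv ψ) :=
    (hψsmooth.iterate_deriv' 1 1).differentiable one_ne_zero
  have hωd : Differentiable ℝ ω := hωsmooth.differentiable one_ne_zero
  intro y
  obtain ⟨hW', hP', hΨ'⟩ := soliton_hasDerivAt_reparam (hψd _) (hψ'd _) (hωd _) (hψ _).ne'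
    (hden _) (hode1 _) (hode2 _) hW (hx y)
  exact soliton_hasDerivAt_XY (P := logDeriv ψ ∘ x) (Ψ := ψ ∘ x) (by omega) (hψ _).ne' hW' hP'
    hΨ' hX hY
end

section
/- Any trajectory of the system X' = X³ - X + Y²/√n, Y' = Y(X² - X/√n) starting at a point (X(0), Y(0)) with X(0)² + Y(0)² < 1 and Y(0) > 0 sufficiently close to (1,0) exists for all y ∈ (-∞, +∞) and converges to the origin (0,0) as y → +∞. -/
/-!
Along a trajectory, `L = X² + Y²` satisfies `L' = 2X²(L - 1)`, so inside the unit disk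
`|(1 - L)'| ≤ 2(1 - L)`: comparing `1 - L` with a decaying exponential shows that a trajectory
starting in the open disk never reaches the unit circle, forward or backward in time. The field is
bounded and Lipschitz on the disk, so the trajectory is global.

Forward in time `L` decreases to a limit `l` at rate at least `c X²` with `c > 0`, and `X²` is
Lipschitz, so `X² → 0`. Then `Y² → l` and `X' → l / √n`, which is compatible with `X → 0` only
if `l = 0`.
-/

open Filter Topology Set
open scoped NNReal

section GlobalExistence

variable {E : Type*} [NormedAddCommGroup E] [NormedSpace ℝ E] [CompleteSpace E]

theorem exists_forall_mem_Ioo_hasDerivAt_of_lipschitzWith {v : E → E} {K L : ℝ≥0}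
    (hv : LipschitzWith K v) (hL : ∀ x, ‖v x‖ ≤ L) (x₀ : E) {T : ℝ} (hT : 0 < T) :
    ∃ γ : ℝ → E, γ 0 = x₀ ∧ ∀ t ∈ Ioo (-T) T, HasDerivAt γ (v (γ t)) t := by
  have hpl : IsPicardLindelof (fun _ ↦ v) (tmin := -T) (tmax := T)
      ⟨0, by constructor <;> linarith⟩ x₀ (L * T.toNNReal) 0 L K :=
    { lipschitzOnWith := fun _ _ ↦ hv.lipschitzOnWith
      continuousOn := fun _ _ ↦ continuousOn_const
      norm_le := fun _ _ x _ ↦ hL x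
      mul_max_le := by simp [hT.le] }
  obtain ⟨γ, hγ0, hγ⟩ := hpl.exists_eq_forall_mem_Icc_hasDerivWithinAt₀
  exact ⟨γ, hγ0, fun t ht ↦ (hγ t (Ioo_subset_Icc_self ht)).hasDerivAt (Icc_mem_nhds ht.1 ht.2)⟩

theorem exists_forall_hasDerivAt_of_lipschitzWith {v : E → E} {K L : ℝ≥0}
    (hv : LipschitzWith K v) (hL : ∀ x, ‖v x‖ ≤ L) (x₀ : E) :
    ∃ γ : ℝ → E, γ 0 = x₀ ∧ ∀ t, HasDerivAt γ (v (γ t)) t := by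
  choose γ hγ0 hγ using fun T : ℝ ↦
    exists_forall_mem_Ioo_hasDerivAt_of_lipschitzWith hv hL x₀ (T := |T| + 1) (by positivity)
  have hagree : ∀ a b z, |z| < |a| + 1 → |z| < |b| + 1 → γ a z = γ b z := by
    intro a b z ha hb
    set m := min (|a| + 1) (|b| + 1)
    have hm : 0 < m := lt_min (by positivity) (by positivity)
    refine ODE_solution_unique_of_mem_Ioo (v := fun _ ↦ v) (s := fun _ ↦ univ) (t₀ := 0)
      (fun _ _ ↦ hv.lipschitzOnWith) (a := -m) (b := m) ⟨by linarith, hm⟩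
      (fun t ht ↦ ⟨hγ a t ⟨?_, ?_⟩, trivial⟩) (fun t ht ↦ ⟨hγ b t ⟨?_, ?_⟩, trivial⟩)
      (by rw [hγ0, hγ0]) (abs_lt.mp (lt_min ha hb))
    all_goals linarith [ht.1, ht.2, min_le_left (|a| + 1) (|b| + 1),
      min_le_right (|a| + 1) (|b| + 1)]
  -- `γ T` solves on `(-(|T| + 1), |T| + 1)`, so the diagonal `t ↦ γ t t` is defined everywhere.
  refine ⟨fun t ↦ γ t t, hγ0 0, fun t ↦ ?_⟩
  have ht : t ∈ Ioo (-(|t| + 1)) (|t| + 1) := abs_lt.mp (lt_add_one _)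
  have heq : (fun z ↦ γ z z) =ᶠ[𝓝 t] γ t :=
    eventually_of_mem (Ioo_mem_nhds ht.1 ht.2) fun z hz ↦
      hagree z t z (lt_add_one _) (abs_lt.mpr hz)
  exact (hγ t t ht).congr_of_eventuallyEq heq

theorem exists_forall_hasDerivAt_comp_of_isCompact {v π : E → E} {S : Set E} {K : ℝ≥0}
    (hS : IsCompact S) (hv : LocallyLipschitzOn S v) (hπ : LipschitzWith K π)
    (hπS : ∀ x, π x ∈ S) (x₀ : E) :
    ∃ γ : ℝ → E, γ 0 = x₀ ∧ ∀ t, HasDerivAt γ (v (π (γ t))) t := by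
  obtain ⟨K', hK'⟩ := hv.exists_lipschitzOnWith_of_compact hS
  obtain ⟨C, hC⟩ := hS.exists_bound_of_continuousOn hv.continuousOn
  have hlip : LipschitzWith (K' * K) (v ∘ π) :=
    lipschitzOnWith_univ.mp (hK'.comp hπ.lipschitzOnWith fun x _ ↦ hπS x)
  exact exists_forall_hasDerivAt_of_lipschitzWith hlip
    (L := C.toNNReal) (fun x ↦ (hC _ (hπS x)).trans (Real.le_coe_toNNReal C)) x₀

end GlobalExistence

theorem pos_of_neg_mul_lt_deriv {u u' : ℝ → ℝ} {K : ℝ} (hu : ∀ t, HasDerivAt u (u' t) t)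
    (h0 : 0 < u 0) (hK : ∀ t, 0 < u t → -(K * u t) < u' t) {t : ℝ} (ht : 0 ≤ t) :
    0 < u t := by
  set B : ℝ → ℝ := fun x ↦ u 0 * Real.exp (-K * x)
  have hB : ∀ x, HasDerivAt (fun x ↦ -B x) (K * B x) x := fun x ↦ by
    have := (((hasDerivAt_id' x).const_mul (-K)).exp.const_mul (u 0)).fun_neg
    exact this.congr_deriv (by ring)
  have hle := image_le_of_deriv_right_lt_deriv_boundary (f := fun x ↦ -u x) (a := 0) (b := t)
    (fun x _ ↦ (hu x).continuousAt.neg.continuousWithinAt) (fun x _ ↦ (hu x).neg.hasDerivWithinAt)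
    (by simp [B]) hB (fun x _ hx ↦ by
      have hux : u x = B x := neg_inj.mp hx
      have := hK x (hux ▸ by positivity)
      rw [← hux]; linarith)
  have hBt : 0 < B t := by positivity
  have hut := hle ⟨ht, le_rfl⟩
  linarith

theorem pos_of_abs_deriv_lt_mul {u u' : ℝ → ℝ} {K : ℝ} (hu : ∀ t, HasDerivAt u (u' t) t)
    (h0 : 0 < u 0) (hK : ∀ t, 0 < u t → |u' t| < K * u t) (t : ℝ) : 0 < u t := by
  rcases le_total 0 t with ht | ht
  · exact pos_of_neg_mul_lt_deriv (K := K) hu h0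
      (fun x hx ↦ by linarith [neg_abs_le (u' x), hK x hx]) ht
  · have hu_neg : ∀ x, HasDerivAt (fun x ↦ u (-x)) (-u' (-x)) x := fun x ↦ by
      simpa [Function.comp_def] using (hu (-x)).comp x (hasDerivAt_neg x)
    simpa using pos_of_neg_mul_lt_deriv (K := K) hu_neg (by simpa using h0)
      (fun x hx ↦ by linarith [le_abs_self (u' (-x)), hK (-x) hx]) (neg_nonneg.mpr ht)

theorem tendsto_zero_of_deriv_le_neg_mul {G G' g : ℝ → ℝ} {l c : ℝ} {C : ℝ≥0}
    (hG : ∀ t, HasDerivAt G (G' t) t) (hGl : Tendsto G atTop (𝓝 l)) (hc : 0 < c)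
    (hG' : ∀ᶠ t in atTop, G' t ≤ -(c * g t)) (hg : ∀ t, 0 ≤ g t) (hgC : LipschitzWith C g) :
    Tendsto g atTop (𝓝 0) := by
  obtain ⟨T, hT⟩ := eventually_atTop.mp hG'
  refine tendsto_order.2 ⟨fun a ha ↦ Eventually.of_forall fun t ↦ ha.trans_le (hg t),
    fun ε hε ↦ ?_⟩
  set h : ℝ := ε / (2 * (C + 1))
  have hh : 0 < h := by positivity
  have hCh : C * h < ε / 2 := by
    rw [show C * h = ε / 2 * (C / (C + 1)) by simp only [h]; field_simp]
    exact mul_lt_of_lt_one_right (by positivity) ((div_lt_one (by positivity)).mpr (lt_add_one _))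
  have hdrop : Tendsto (fun t ↦ G t - G (t + h)) atTop (𝓝 0) := by
    simpa using hGl.sub (hGl.comp (tendsto_atTop_add_const_right _ h tendsto_id))
  filter_upwards [hdrop.eventually (gt_mem_nhds (show 0 < c * h * (ε / 2) by positivity)),
    eventually_ge_atTop T] with t hsmall htT
  -- The mean value theorem finds `ξ ∈ (t, t + h)` where `g` is small; Lipschitz brings it to `t`.
  obtain ⟨ξ, hξ, hslope⟩ := exists_hasDerivAt_eq_slope G G' (lt_add_of_pos_right t hh)
    (fun x _ ↦ (hG x).continuousAt.continuousWithinAt) (fun x _ ↦ hG x)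
  have hgξ : g ξ < ε / 2 := by
    have hξT := hT ξ (htT.trans hξ.1.le)
    rw [hslope, add_sub_cancel_left, div_le_iff₀ hh] at hξT
    exact lt_of_mul_lt_mul_left (by linarith) (by positivity : 0 ≤ c * h)
  have hgt : g t ≤ g ξ + C * h := by
    have := hgC.dist_le_mul t ξ
    rw [Real.dist_eq, Real.dist_eq, abs_sub_comm t, abs_of_pos (sub_pos.mpr hξ.1)] at this
    nlinarith [le_abs_self (g t - g ξ), hξ.2, C.2]
  linarith

theorem eq_zero_of_tendsto_of_tendsto_deriv {f f' : ℝ → ℝ} {a b : ℝ}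
    (hf : ∀ t, HasDerivAt f (f' t) t) (hfa : Tendsto f atTop (𝓝 a))
    (hf'b : Tendsto f' atTop (𝓝 b)) : b = 0 := by
  choose ξ hξ hslope using fun t : ℝ ↦ exists_hasDerivAt_eq_slope f f' (lt_add_one t)
    (fun x _ ↦ (hf x).continuousAt.continuousWithinAt) (fun x _ ↦ hf x)
  have hξ_top : Tendsto ξ atTop atTop := tendsto_atTop_mono (fun t ↦ (hξ t).1.le) tendsto_id
  have hincr : Tendsto (fun t ↦ f (t + 1) - f t) atTop (𝓝 0) := by
    simpa using (hfa.comp (tendsto_atTop_add_const_right _ 1 tendsto_id)).sub hfa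
  refine tendsto_nhds_unique ((hf'b.comp hξ_top).congr fun t ↦ ?_) hincr
  simp [hslope]

theorem tendsto_zero_of_tendsto_sq_zero {α : Type*} {l : Filter α} {f : α → ℝ}
    (h : Tendsto (fun x ↦ f x ^ 2) l (𝓝 0)) : Tendsto f l (𝓝 0) := by
  rw [tendsto_zero_iff_abs_tendsto_zero]
  simpa [Function.comp_def, Real.sqrt_sq_eq_abs] using h.sqrt

section PlaneCurves

variable {γ : ℝ → ℝ × ℝ} {w : ℝ × ℝ} {t : ℝ}

theorem HasDerivAt.fst (h : HasDerivAt γ w t) : HasDerivAt (fun t ↦ (γ t).1) w.1 t :=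
  (hasFDerivAt_fst (p := γ t)).comp_hasDerivAt t h

theorem HasDerivAt.snd (h : HasDerivAt γ w t) : HasDerivAt (fun t ↦ (γ t).2) w.2 t :=
  (hasFDerivAt_snd (p := γ t)).comp_hasDerivAt t h

theorem HasDerivAt.fst_sq_add_snd_sq (h : HasDerivAt γ w t) :
    HasDerivAt (fun t ↦ (γ t).1 ^ 2 + (γ t).2 ^ 2) (2 * ((γ t).1 * w.1 + (γ t).2 * w.2)) t :=
  (h.fst.fun_pow 2 |>.fun_add (h.snd.fun_pow 2)).congr_deriv (by simp; ring)

end PlaneCurves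

/-- Coordinatewise clamping onto `[-1, 1]²`, the closed unit ball of the sup norm on `ℝ × ℝ`.
It fixes the unit disk, so composing a field with it changes nothing along trajectories that stay
in the disk. -/
noncomputable def clampUnitSquare (p : ℝ × ℝ) : ℝ × ℝ :=
  (projIcc (-1) 1 (by norm_num) p.1, projIcc (-1) 1 (by norm_num) p.2)

theorem lipschitzWith_clampUnitSquare : LipschitzWith 1 clampUnitSquare := by
  have h := (LipschitzWith.subtype_val _).comp
    (LipschitzWith.projIcc (by norm_num : (-1 : ℝ) ≤ 1))
  have := (h.comp LipschitzWith.prod_fst).prodMk (h.comp LipschitzWith.prod_snd)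
  rwa [mul_one, mul_one, max_self] at this

theorem clampUnitSquare_mem_closedBall (p : ℝ × ℝ) :
    clampUnitSquare p ∈ Metric.closedBall 0 1 := by
  rw [mem_closedBall_zero_iff, Prod.norm_def, Real.norm_eq_abs, Real.norm_eq_abs, max_le_iff,
    abs_le, abs_le]
  exact ⟨(projIcc (-1 : ℝ) 1 (by norm_num) p.1).2, (projIcc (-1 : ℝ) 1 (by norm_num) p.2).2⟩

theorem clampUnitSquare_of_sq_add_sq_le {p : ℝ × ℝ} (hp : p.1 ^ 2 + p.2 ^ 2 ≤ 1) :
    clampUnitSquare p = p := by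
  have h1 : p.1 ∈ Icc (-1) 1 := abs_le.mp (abs_le_one_iff_mul_self_le_one.mpr (by nlinarith))
  have h2 : p.2 ∈ Icc (-1) 1 := abs_le.mp (abs_le_one_iff_mul_self_le_one.mpr (by nlinarith))
  simp [clampUnitSquare, projIcc_of_mem _ h1, projIcc_of_mem _ h2]

/-- The right-hand side of `X' = X³ - X + Y²/s`, `Y' = Y(X² - X/s)`; the theorem has `s = √n`. -/
noncomputable def steadyField (s : ℝ) (p : ℝ × ℝ) : ℝ × ℝ :=
  (p.1 ^ 3 - p.1 + p.2 ^ 2 / s, p.2 * (p.1 ^ 2 - p.1 / s))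

theorem contDiff_steadyField (s : ℝ) : ContDiff ℝ 1 (steadyField s) := by
  unfold steadyField; fun_prop

theorem fst_mul_steadyField_add (s : ℝ) (p : ℝ × ℝ) :
    p.1 * (steadyField s p).1 + p.2 * (steadyField s p).2 =
      p.1 ^ 2 * (p.1 ^ 2 + p.2 ^ 2 - 1) := by
  simp only [steadyField]; ring

theorem abs_steadyField_fst_le {s : ℝ} (hs : 0 < s) {p : ℝ × ℝ} (hp : p.1 ^ 2 + p.2 ^ 2 ≤ 1) :
    |(steadyField s p).1| ≤ 1 + 1 / s := by
  have hcubic : |p.1 ^ 3 - p.1| ≤ 1 := by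
    rw [abs_le]
    constructor <;> nlinarith [sq_nonneg p.1, sq_nonneg p.2, sq_nonneg (p.1 + 1),
      sq_nonneg (p.1 - 1)]
  have hquad : |p.2 ^ 2 / s| ≤ 1 / s := by
    rw [abs_of_nonneg (by positivity)]
    exact div_le_div_of_nonneg_right (by nlinarith [sq_nonneg p.1]) hs.le
  exact (abs_add_le _ _).trans (add_le_add hcubic hquad)

theorem lipschitzWith_fst_sq_of_steadyField {s : ℝ} (hs : 0 < s) {γ : ℝ → ℝ × ℝ}
    (hγ : ∀ t, HasDerivAt γ (steadyField s (γ t)) t)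
    (hdisk : ∀ t, (γ t).1 ^ 2 + (γ t).2 ^ 2 ≤ 1) :
    LipschitzWith (2 + 2 / s).toNNReal (fun t ↦ (γ t).1 ^ 2) := by
  have hsq : ∀ t, HasDerivAt (fun t ↦ (γ t).1 ^ 2) _ t := fun t ↦ (hγ t).fst.fun_pow 2
  refine lipschitzWith_of_nnnorm_deriv_le (fun t ↦ (hsq t).differentiableAt) fun t ↦ ?_
  rw [(hsq t).deriv, ← NNReal.coe_le_coe, coe_nnnorm, Real.coe_toNNReal _ (by positivity),
    Real.norm_eq_abs]
  have h1 := abs_steadyField_fst_le hs (hdisk t)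
  have h2 : |(γ t).1| ≤ 1 :=
    abs_le_one_iff_mul_self_le_one.mpr (by nlinarith [hdisk t, sq_nonneg (γ t).2])
  calc |(2 : ℕ) * (γ t).1 ^ (2 - 1) * (steadyField s (γ t)).1|
      = 2 * |(γ t).1| * |(steadyField s (γ t)).1| := by
        rw [abs_mul, abs_mul, pow_one]; norm_num
    _ ≤ 2 * 1 * (1 + 1 / s) := by gcongr
    _ = 2 + 2 / s := by ring

theorem exists_steadyField_solution_sq_add_sq_lt_one (s : ℝ) {p₀ : ℝ × ℝ}
    (hp₀ : p₀.1 ^ 2 + p₀.2 ^ 2 < 1) :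
    ∃ γ : ℝ → ℝ × ℝ, γ 0 = p₀ ∧
      ∀ t, HasDerivAt γ (steadyField s (γ t)) t ∧ (γ t).1 ^ 2 + (γ t).2 ^ 2 < 1 := by
  obtain ⟨γ, hγ0, hγ⟩ := exists_forall_hasDerivAt_comp_of_isCompact (isCompact_closedBall 0 1)
    (contDiff_steadyField s).locallyLipschitz.locallyLipschitzOn lipschitzWith_clampUnitSquare
    clampUnitSquare_mem_closedBall p₀
  -- Inside the disk `(1 - L)' = 2X²(1 - L)` with `2X² ≤ 2 < 3`.
  have hinside : ∀ t, (γ t).1 ^ 2 + (γ t).2 ^ 2 < 1 := by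
    have hgap := pos_of_abs_deriv_lt_mul (K := 3) (fun t ↦ (hγ t).fst_sq_add_snd_sq.const_sub 1)
      (by rw [hγ0]; linarith) fun t ht ↦ by
        rw [clampUnitSquare_of_sq_add_sq_le (by linarith), fst_mul_steadyField_add]
        have hX : (γ t).1 ^ 2 ≤ 1 := by nlinarith
        rw [abs_lt]; constructor <;> nlinarith
    exact fun t ↦ by linarith [hgap t]
  refine ⟨γ, hγ0, fun t ↦ ⟨?_, hinside t⟩⟩
  simpa [clampUnitSquare_of_sq_add_sq_le (hinside t).le] using hγ t

theorem tendsto_zero_of_steadyField {s : ℝ} (hs : 0 < s) {γ : ℝ → ℝ × ℝ}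
    (hγ : ∀ t, HasDerivAt γ (steadyField s (γ t)) t)
    (hdisk : ∀ t, (γ t).1 ^ 2 + (γ t).2 ^ 2 < 1) : Tendsto γ atTop (𝓝 0) := by
  set X : ℝ → ℝ := fun t ↦ (γ t).1
  set L : ℝ → ℝ := fun t ↦ (γ t).1 ^ 2 + (γ t).2 ^ 2
  have hLt : ∀ t, L t < 1 := hdisk
  have hX : ∀ t, HasDerivAt X (steadyField s (γ t)).1 t := fun t ↦ (hγ t).fst
  have hL : ∀ t, HasDerivAt L (2 * (X t ^ 2 * (L t - 1))) t := fun t ↦ by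
    simpa only [fst_mul_steadyField_add] using (hγ t).fst_sq_add_snd_sq
  have hL_anti : Antitone L := antitone_of_hasDerivAt_nonpos hL fun t ↦ by
    rw [Pi.zero_apply]; nlinarith [hLt t, sq_nonneg (X t)]
  obtain ⟨l, hLl⟩ : ∃ l, Tendsto L atTop (𝓝 l) :=
    ⟨_, tendsto_atTop_ciInf hL_anti ⟨0, by rintro _ ⟨t, rfl⟩; positivity⟩⟩
  have hX2 : Tendsto (fun t ↦ X t ^ 2) atTop (𝓝 0) := by
    refine tendsto_zero_of_deriv_le_neg_mul hL hLl (c := 2 * (1 - L 0)) (by linarith [hLt 0]) ?_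
      (fun t ↦ sq_nonneg _) (lipschitzWith_fst_sq_of_steadyField hs hγ fun t ↦ (hdisk t).le)
    filter_upwards [eventually_ge_atTop 0] with t ht
    nlinarith [hL_anti ht, sq_nonneg (X t)]
  have hX0 := tendsto_zero_of_tendsto_sq_zero hX2
  have hl : l = 0 := by
    have hX' : Tendsto (fun t ↦ (steadyField s (γ t)).1) atTop (𝓝 (0 ^ 3 - 0 + (l - 0) / s)) :=
      (((hX0.pow 3).sub hX0).add ((hLl.sub hX2).div_const s)).congr fun t ↦ by
        simp only [steadyField, L, X]; ring
    simpa [hs.ne'] using eq_zero_of_tendsto_of_tendsto_deriv hX hX0 hX'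
  subst hl
  have hY2 : Tendsto (fun t ↦ (γ t).2 ^ 2) atTop (𝓝 0) :=
    squeeze_zero (fun t ↦ sq_nonneg _) (fun t ↦ le_add_of_nonneg_left (sq_nonneg (X t))) hLl
  exact hX0.prodMk_nhds (tendsto_zero_of_tendsto_sq_zero hY2)

/-- **Trajectories near `(1,0)` inside the unit disk are global and converge to the
origin.**  Any trajectory of `X' = X³ - X + Y²/√n`, `Y' = Y(X² - X/√n)` starting at
`(X₀, Y₀)` with `X₀² + Y₀² < 1`, `Y₀ > 0`, sufficiently close to `(1,0)`, exists for all
`y ∈ (-∞, +∞)` and converges to `(0,0)` as `y → +∞`. -/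
theorem steady_trajectories_global_and_converge (n : ℕ) (hn : 2 ≤ n) :
    ∃ ε > (0 : ℝ), ∀ X₀ Y₀ : ℝ,
      X₀ ^ 2 + Y₀ ^ 2 < 1 → 0 < Y₀ → (X₀ - 1) ^ 2 + Y₀ ^ 2 < ε ^ 2 →
      ∃ X Y : ℝ → ℝ,
        X 0 = X₀ ∧ Y 0 = Y₀ ∧
        (∀ y, HasDerivAt X ((X y) ^ 3 - X y + (Y y) ^ 2 / Real.sqrt n) y) ∧
        (∀ y, HasDerivAt Y (Y y * ((X y) ^ 2 - X y / Real.sqrt n)) y) ∧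
        Tendsto (fun y => (X y, Y y)) atTop (nhds ((0 : ℝ), (0 : ℝ))) := by
  refine ⟨1, one_pos, fun X₀ Y₀ hdisk _ _ ↦ ?_⟩
  have hs : 0 < Real.sqrt n := Real.sqrt_pos.mpr (by exact_mod_cast (by omega : 0 < n))
  obtain ⟨γ, hγ0, hγ⟩ := exists_steadyField_solution_sq_add_sq_lt_one (Real.sqrt n)
    (p₀ := (X₀, Y₀)) hdisk
  exact ⟨fun t ↦ (γ t).1, fun t ↦ (γ t).2, by simp [hγ0], by simp [hγ0],
    fun t ↦ (hγ t).1.fst, fun t ↦ (hγ t).1.snd,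
    tendsto_zero_of_steadyField hs (fun t ↦ (hγ t).1) (fun t ↦ (hγ t).2)⟩
end

section
/- Suppose a solution (W, X, Y) of the linearized-dominated system near the source (0,1,0) satisfies |(W(0), X(0)-1, Y(0))| < ε for ε small enough. Then for all y ≤ 0, |(W(y), X(y)-1, Y(y))| ≤ √3 ε e^{μ y} for some 0 < μ < 1 - 1/√n. -/
/-!
Let `r = W² + (X - 1)² + Y²`. The linearization at the source is `diag(1, 2, 1 - 1/√n)`, so
`r' = 2⟨(W, X - 1, Y), F⟩ ≥ (1 - 1/√n - O(δ)) r` as long as `r ≤ δ²`; with `δ` small this gives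
`r' ≥ 2μ r` for `μ = (1 - 1/√n)/2`. Hence `r(t) e^{-2μt}` is nondecreasing on any interval
`[t, 0]` on which `r ≤ δ²`. Going backwards from `r(0) < ε² < δ²`, the solution therefore can
never reach the sphere `r = δ²` (at the last time it did, `r` would be `≤ r(0)`), and
`r(y) ≤ ε² e^{2μy}` for all `y ≤ 0`.
-/

open Set Real

lemma hasDerivAt_sq_add_sq_add_sq {a b c : ℝ → ℝ} {a' b' c' t : ℝ} (ha : HasDerivAt a a' t)
    (hb : HasDerivAt b b' t) (hc : HasDerivAt c c' t) :
    HasDerivAt (fun s => a s ^ 2 + b s ^ 2 + c s ^ 2) (2 * (a t * a' + b t * b' + c t * c')) t :=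
  (((ha.fun_pow 2).add (hb.fun_pow 2)).add (hc.fun_pow 2)).congr_deriv
    (by simp only [Nat.cast_ofNat, Nat.add_one_sub_one, pow_one]; ring)

lemma le_mul_exp_of_mul_le_deriv {g g' : ℝ → ℝ} {κ a b : ℝ} (hab : a ≤ b)
    (hg : ∀ t ∈ Icc a b, HasDerivAt g (g' t) t) (hgrowth : ∀ t ∈ Ioo a b, κ * g t ≤ g' t) :
    g a ≤ g b * exp (κ * (a - b)) := by
  set f : ℝ → ℝ := fun t => g t * exp (-(κ * t))
  have hf : ∀ t ∈ Icc a b, HasDerivAt f ((g' t - κ * g t) * exp (-(κ * t))) t := fun t ht =>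
    ((hg t ht).mul ((hasDerivAt_id t).const_mul κ).neg.exp).congr_deriv
      (by simp only [id_eq, Pi.neg_apply, mul_one, mul_neg]; ring)
  have hmono : MonotoneOn f (Icc a b) := by
    refine monotoneOn_of_hasDerivWithinAt_nonneg (convex_Icc a b)
      (f' := fun t => (g' t - κ * g t) * exp (-(κ * t)))
      (fun t ht => (hf t ht).continuousAt.continuousWithinAt) (fun t ht => ?_) (fun t ht => ?_)
    · rw [interior_Icc] at ht
      exact (hf t (Ioo_subset_Icc_self ht)).hasDerivWithinAt
    · rw [interior_Icc] at ht
      exact mul_nonneg (sub_nonneg.2 (hgrowth t ht)) (exp_nonneg _)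
  calc g a = f a * exp (κ * a) := by
        simp only [f, mul_assoc, ← exp_add, neg_add_cancel, exp_zero, mul_one]
    _ ≤ f b * exp (κ * a) := by gcongr; exact hmono (left_mem_Icc.2 hab) (right_mem_Icc.2 hab) hab
    _ = g b * exp (κ * (a - b)) := by simp only [f, mul_assoc, ← exp_add]; ring_nf

lemma le_mul_exp_of_mul_le_deriv_of_lt {g g' : ℝ → ℝ} {κ c : ℝ} (hκ : 0 ≤ κ)
    (hg : ∀ t ≤ 0, HasDerivAt g (g' t) t) (hgrowth : ∀ t ≤ 0, g t ≤ c → κ * g t ≤ g' t)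
    (h0 : 0 ≤ g 0) (hc : g 0 < c) {y : ℝ} (hy : y ≤ 0) : g y ≤ g 0 * exp (κ * y) := by
  have hdecay : ∀ b ≤ 0, (∀ t ∈ Ioo b 0, g t ≤ c) → g b ≤ g 0 * exp (κ * b) := fun b hb hbc => by
    simpa using le_mul_exp_of_mul_le_deriv hb (fun t ht => hg t ht.2)
      (fun t ht => hgrowth t ht.2.le (hbc t ht))
  have hlt : ∀ t ≤ 0, g t < c := by
    by_contra! ⟨t, ht, hct⟩
    set S := Icc t 0 ∩ g ⁻¹' Ici c
    have hS : IsCompact S := isCompact_Icc.of_isClosed_subset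
      ((ContinuousOn.preimage_isClosed_of_isClosed
        (fun s hs => (hg s hs.2).continuousAt.continuousWithinAt) isClosed_Icc isClosed_Ici))
      inter_subset_left
    have htS : t ∈ S := ⟨left_mem_Icc.2 ht, hct⟩
    obtain ⟨b, ⟨⟨-, hb⟩, hcb⟩, hbmax⟩ := hS.exists_isGreatest ⟨t, htS⟩
    have hbelow : ∀ s ∈ Ioo b 0, g s ≤ c := fun s hs => by
      by_contra! hcs
      exact hs.1.not_ge (hbmax ⟨⟨(hbmax htS).trans hs.1.le, hs.2.le⟩, hcs.le⟩)
    have : g 0 * exp (κ * b) ≤ g 0 :=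
      mul_le_of_le_one_right h0 (exp_le_one_iff.2 (mul_nonpos_of_nonneg_of_nonpos hκ hb))
    linarith [hdecay b hb hbelow, show c ≤ g b from hcb]
  exact hdecay y hy fun t ht => (hlt t ht.2.le).le

lemma inner_field_ge_near_source {lam s δ w x y : ℝ} (hs : 1 ≤ s) (hδ : 0 ≤ δ)
    (hδsmall : (3 + |lam| * (s + 1)) * δ ≤ (1 - 1 / s) / 2)
    (hr : w ^ 2 + (x - 1) ^ 2 + y ^ 2 ≤ δ ^ 2) :
    (1 - 1 / s) * (w ^ 2 + (x - 1) ^ 2 + y ^ 2) ≤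
      2 * (w * (w * (x ^ 2 - lam * w ^ 2))
        + (x - 1) * (x ^ 3 - x + y ^ 2 / s + lam * (s - x) * w ^ 2)
        + y * (y * (x ^ 2 - x / s - lam * w ^ 2))) := by
  obtain ⟨v, rfl⟩ : ∃ v, x = v + 1 := ⟨x - 1, by ring⟩
  rw [add_sub_cancel_right] at hr ⊢
  set C := 3 + |lam| * (s + 1)
  have hs0 : 0 < s := by linarith
  have hinv : 0 < 1 / s ∧ 1 / s ≤ 1 := ⟨by positivity, (div_le_one hs0).2 hs⟩
  have hC : 3 ≤ C := by nlinarith [abs_nonneg lam]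
  have hδ1 : δ ≤ 1 := by nlinarith
  have hw : w ^ 2 ≤ δ := by nlinarith [sq_nonneg v, sq_nonneg y]
  have hv : |v| ≤ δ := abs_le_of_sq_le_sq' (by nlinarith [sq_nonneg w, sq_nonneg y]) hδ |> abs_le.2
  obtain ⟨hv₁, hv₂⟩ := abs_le.1 hv
  -- Linear part `w² + 2v² + (1 - 1/s) y²` plus cubic terms whose coefficients are `O(δ)`.
  have hidentity :
      w * (w * ((v + 1) ^ 2 - lam * w ^ 2))
        + v * ((v + 1) ^ 3 - (v + 1) + y ^ 2 / s + lam * (s - (v + 1)) * w ^ 2)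
        + y * (y * ((v + 1) ^ 2 - (v + 1) / s - lam * w ^ 2))
      = w ^ 2 + 2 * v ^ 2 + (1 - 1 / s) * y ^ 2
        + w ^ 2 * (2 * v + v ^ 2 + lam * ((s - 1) * v - v ^ 2 - w ^ 2))
        + v ^ 2 * (3 * v + v ^ 2)
        + y ^ 2 * (2 * v + v ^ 2 - lam * w ^ 2) := by
    field_simp
    ring
  have hlam : |lam * ((s - 1) * v - v ^ 2 - w ^ 2)| ≤ |lam| * ((s + 1) * δ) := by
    rw [abs_mul]
    refine mul_le_mul_of_nonneg_left (abs_le.2 ⟨?_, ?_⟩) (abs_nonneg lam)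
    · nlinarith [mul_le_mul_of_nonneg_left hv₁ (sub_nonneg.2 hs)]
    · nlinarith [mul_le_mul_of_nonneg_left hv₂ (sub_nonneg.2 hs)]
  have hlam' : |lam * w ^ 2| ≤ |lam| * δ := by
    rw [abs_mul, abs_of_nonneg (sq_nonneg w)]
    exact mul_le_mul_of_nonneg_left hw (abs_nonneg lam)
  have hcoef_w : -(C * δ) ≤ 2 * v + v ^ 2 + lam * ((s - 1) * v - v ^ 2 - w ^ 2) := by
    nlinarith [(abs_le.1 hlam).1, sq_nonneg v]
  have hcoef_v : -(C * δ) ≤ 3 * v + v ^ 2 := by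
    nlinarith [sq_nonneg v, mul_nonneg (abs_nonneg lam) (mul_nonneg (by linarith : 0 ≤ s + 1) hδ)]
  have hcoef_y : -(C * δ) ≤ 2 * v + v ^ 2 - lam * w ^ 2 := by
    nlinarith [(abs_le.1 hlam').2, sq_nonneg v, mul_nonneg (abs_nonneg lam) (mul_nonneg hs0.le hδ)]
  rw [hidentity]
  have hr0 : 0 ≤ w ^ 2 + v ^ 2 + y ^ 2 := by positivity
  nlinarith [mul_le_mul_of_nonneg_left hcoef_w (sq_nonneg w),
    mul_le_mul_of_nonneg_left hcoef_v (sq_nonneg v),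
    mul_le_mul_of_nonneg_left hcoef_y (sq_nonneg y),
    mul_nonneg hinv.1.le (sq_nonneg w), mul_nonneg hinv.1.le (sq_nonneg v), sq_nonneg v,
    mul_nonneg (sub_nonneg.2 hδsmall) hr0]

/-- **Exponential estimate near the source `(0,1,0)`.**  There is `0 < μ < 1 - 1/√n`
(the least eigenvalue) and `ε₀ > 0` such that for any `0 < ε < ε₀`, every solution
`(W, X, Y)` of `W' = W(X² - λW²)`, `X' = X³ - X + Y²/√n + λ(√n - X)W²`,
`Y' = Y(X² - X/√n - λW²)` on `(-∞, 0]` with `|(W(0), X(0)-1, Y(0))| < ε` satisfies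
`|(W(y), X(y)-1, Y(y))| ≤ √3 ε e^{μ y}` for all `y ≤ 0`. -/
theorem exponential_estimate_near_source (n : ℕ) (hn : 2 ≤ n) (lam : ℝ) :
    ∃ μ : ℝ, 0 < μ ∧ μ < 1 - 1 / Real.sqrt n ∧
    ∃ ε₀ > (0 : ℝ), ∀ ε : ℝ, 0 < ε → ε < ε₀ →
      ∀ W X Y : ℝ → ℝ,
        (∀ y ≤ (0 : ℝ), HasDerivAt W (W y * ((X y) ^ 2 - lam * (W y) ^ 2)) y) →
        (∀ y ≤ (0 : ℝ), HasDerivAt X ((X y) ^ 3 - X y + (Y y) ^ 2 / Real.sqrt n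
            + lam * (Real.sqrt n - X y) * (W y) ^ 2) y) →
        (∀ y ≤ (0 : ℝ), HasDerivAt Y (Y y * ((X y) ^ 2 - X y / Real.sqrt n
            - lam * (W y) ^ 2)) y) →
        Real.sqrt ((W 0) ^ 2 + (X 0 - 1) ^ 2 + (Y 0) ^ 2) < ε →
        ∀ y ≤ (0 : ℝ),
          Real.sqrt ((W y) ^ 2 + (X y - 1) ^ 2 + (Y y) ^ 2)
            ≤ Real.sqrt 3 * ε * Real.exp (μ * y) := by
  have hs : 1 < √n := by
    rw [show (1 : ℝ) = √1 by simp]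
    exact sqrt_lt_sqrt zero_le_one (by exact_mod_cast hn)
  set κ := 1 - 1 / √n
  have hκ : 0 < κ := by linarith [(div_lt_one (by linarith)).2 hs]
  set μ := κ / 2 with hμ
  set C := 3 + |lam| * (√n + 1)
  have hC : 0 < C := by positivity
  refine ⟨μ, by positivity, half_lt_self hκ, μ / C, by positivity,
    fun ε hε hεδ W X Y hW hX hY h0 y hy => ?_⟩
  set r : ℝ → ℝ := fun t => W t ^ 2 + (X t - 1) ^ 2 + Y t ^ 2
  have hr0 : r 0 < ε ^ 2 := (sqrt_lt' hε).1 h0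
  have hry : r y ≤ r 0 * exp (κ * y) :=
    le_mul_exp_of_mul_le_deriv_of_lt (c := (μ / C) ^ 2) hκ.le
      (fun t ht => hasDerivAt_sq_add_sq_add_sq (hW t ht) ((hX t ht).sub_const 1) (hY t ht))
      (fun t _ hrt => inner_field_ge_near_source hs.le (by positivity)
        (mul_div_cancel₀ μ hC.ne').le hrt)
      (by positivity) (hr0.trans (by gcongr)) hy
  have hexp : exp (κ * y) = exp (μ * y) ^ 2 := by
    rw [sq, ← exp_add, hμ]
    ring_nf
  calc √(r y) ≤ √((ε * exp (μ * y)) ^ 2) := by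
        gcongr
        rw [mul_pow, ← hexp]
        nlinarith [exp_pos (κ * y)]
    _ = ε * exp (μ * y) := sqrt_sq (by positivity)
    _ ≤ √3 * ε * exp (μ * y) := by
      rw [mul_assoc]
      exact le_mul_of_one_le_left (by positivity) (by simp)
end

section
/- In dimension five (n = 4), the functions ψ(x) = a√x and ω(x) = 1/x - 6/a², for any constant a > 0, give an explicit solution on (0, +∞) of the steady soliton ODE system: 4ψ'' - ψω' = 0 and ψψ'' + 3(ψ')² - 3 - ψψ'ω = 0. -/
/-! With `ψ = a√x` one has `ψ' = a / (2√x)` and `ψ'' = -a / (4x√x)`, so `ψω' = -a / (x√x) = 4ψ''`.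
In the second equation the `a² / x` terms cancel, and `ψψ' · (-6 / a²) = -3` cancels the
constant `-3`: this is where the constant `-6 / a²` in `ω` comes from. -/

open Filter Topology Real

theorem hasDerivAt_const_mul_sqrt (a : ℝ) {x : ℝ} (hx : x ≠ 0) :
    HasDerivAt (fun x => a * √x) (a / (2 * √x)) x := by
  simpa [div_eq_mul_inv] using (hasDerivAt_sqrt hx).const_mul a

theorem deriv_const_mul_sqrt (a : ℝ) {x : ℝ} (hx : x ≠ 0) :
    deriv (fun x => a * √x) x = a / (2 * √x) :=
  (hasDerivAt_const_mul_sqrt a hx).deriv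

theorem hasDerivAt_const_div_two_mul_sqrt (a : ℝ) {x : ℝ} (hx : 0 < x) :
    HasDerivAt (fun y => a / (2 * √y)) (-a / (4 * x * √x)) x := by
  have hden : HasDerivAt (fun y => 2 * √y) (2 * (1 / (2 * √x))) x :=
    (hasDerivAt_sqrt hx.ne').const_mul 2
  refine ((hasDerivAt_const x a).div hden (by positivity)).congr_deriv ?_
  field_simp
  rw [sq_sqrt hx.le]
  ring

theorem deriv_deriv_const_mul_sqrt (a : ℝ) {x : ℝ} (hx : 0 < x) :
    deriv (deriv (fun x => a * √x)) x = -a / (4 * x * √x) := by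
  have hderiv : deriv (fun x => a * √x) =ᶠ[𝓝 x] fun y => a / (2 * √y) := by
    filter_upwards [eventually_gt_nhds hx] with y hy using deriv_const_mul_sqrt a hy.ne'
  rw [hderiv.deriv_eq]
  exact (hasDerivAt_const_div_two_mul_sqrt a hx).deriv

theorem deriv_one_div_sub_const (c x : ℝ) :
    deriv (fun x => 1 / x - c) x = -1 / x ^ 2 := by
  simp only [one_div, deriv_sub_const, deriv_inv, neg_div]

/-- **Explicit five-dimensional steady soliton.**  In dimension five (`n = 4`), the
functions `ψ(x) = a√x` and `ω(x) = 1/x - 6/a²`, for any `a > 0`, solve on `(0, +∞)` the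
steady soliton system `4ψ'' - ψω' = 0` and `ψψ'' + 3(ψ')² - 3 - ψψ'ω = 0`. -/
theorem explicit_steady_soliton_dim_five (a : ℝ) (ha : 0 < a) :
    ∀ x > (0 : ℝ),
      4 * deriv (deriv (fun x => a * Real.sqrt x)) x
          - (a * Real.sqrt x) * deriv (fun x => 1 / x - 6 / a ^ 2) x = 0 ∧
      (a * Real.sqrt x) * deriv (deriv (fun x => a * Real.sqrt x)) x
          + 3 * (deriv (fun x => a * Real.sqrt x) x) ^ 2 - 3
          - (a * Real.sqrt x) * deriv (fun x => a * Real.sqrt x) x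
              * (1 / x - 6 / a ^ 2) = 0 := by
  intro x hx
  rw [deriv_deriv_const_mul_sqrt a hx, deriv_const_mul_sqrt a hx.ne', deriv_one_div_sub_const]
  obtain ⟨s, hs, rfl⟩ : ∃ s > 0, x = s ^ 2 := ⟨√x, sqrt_pos.mpr hx, (sq_sqrt hx.le).symm⟩
  rw [sqrt_sq hs.le]
  have ha0 : a ≠ 0 := ha.ne'
  constructor <;> field_simp <;> ring
end

section
/- Suppose φ solves φ'' + (ψ'/ψ) φ' - (φ')² = -C₀ on (0, ∞), where ψ > 0 is smooth, and φ(x) → -∞ as x → 0⁺ and as x → +∞. Then C₀ > 0, every critical point of φ is a strict local maximum, and φ has exactly one critical point. -/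
open Set Filter Topology

/-- **Uniqueness of the critical point of the potential.**  Suppose `φ` solves
`φ'' + (ψ'/ψ)φ' - (φ')² = -C₀` on `(0, ∞)` with `ψ > 0` smooth, and `φ(x) → -∞` as
`x → 0⁺` and as `x → +∞`.  Then `C₀ > 0`, every critical point of `φ` is a strict local
maximum, and `φ` has exactly one critical point. -/
theorem potential_unique_critical_point
    (ψ φ : ℝ → ℝ) (C₀ : ℝ)
    (hψsmooth : ContDiffOn ℝ (⊤ : ℕ∞) ψ (Ioi 0)) (hφsmooth : ContDiffOn ℝ (⊤ : ℕ∞) φ (Ioi 0))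
    (hψ : ∀ x ∈ Ioi (0 : ℝ), 0 < ψ x)
    (hode : ∀ x ∈ Ioi (0 : ℝ),
        deriv (deriv φ) x + (deriv ψ x / ψ x) * deriv φ x - (deriv φ x) ^ 2 = -C₀)
    (h0 : Tendsto φ (nhdsWithin 0 (Ioi 0)) atBot)
    (hinf : Tendsto φ atTop atBot) :
    0 < C₀ ∧
    (∀ x ∈ Ioi (0 : ℝ), deriv φ x = 0 → ∀ᶠ y in nhdsWithin x {x}ᶜ, φ y < φ x) ∧
    (∃! x : ℝ, x ∈ Ioi (0 : ℝ) ∧ deriv φ x = 0) := by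
  have hSopen : IsOpen (Ioi (0:ℝ)) := isOpen_Ioi
  have hφcont : ContinuousOn φ (Ioi 0) := hφsmooth.continuousOn
  have hφd : ∀ x ∈ Ioi (0:ℝ), HasDerivAt φ (deriv φ x) x := fun x hx =>
    ((hφsmooth.differentiableOn (by simp)).differentiableAt (hSopen.mem_nhds hx)).hasDerivAt
  have hψd : ∀ x ∈ Ioi (0:ℝ), HasDerivAt ψ (deriv ψ x) x := fun x hx =>
    ((hψsmooth.differentiableOn (by simp)).differentiableAt (hSopen.mem_nhds hx)).hasDerivAt
  have hφ'cd : ContDiffOn ℝ (⊤ : ℕ∞) (deriv φ) (Ioi 0) :=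
    hφsmooth.deriv_of_isOpen hSopen (by simp)
  have hφ'd : ∀ x ∈ Ioi (0:ℝ), HasDerivAt (deriv φ) (deriv (deriv φ) x) x := fun x hx =>
    ((hφ'cd.differentiableOn (by simp)).differentiableAt (hSopen.mem_nhds hx)).hasDerivAt
  set G : ℝ → ℝ := fun x => ψ x * Real.exp (-φ x) with hGdef
  set F : ℝ → ℝ := fun x => ψ x * Real.exp (-φ x) * deriv φ x with hFdef
  have hGpos : ∀ x ∈ Ioi (0:ℝ), 0 < G x := fun x hx => mul_pos (hψ x hx) (Real.exp_pos _)
  have hF : ∀ x ∈ Ioi (0:ℝ), HasDerivAt F (-C₀ * G x) x := by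
    intro x hx
    have he : HasDerivAt (fun y => Real.exp (-φ y)) (Real.exp (-φ x) * -deriv φ x) x :=
      ((hφd x hx).neg).exp
    have h1 : HasDerivAt (fun y => ψ y * Real.exp (-φ y))
        (deriv ψ x * Real.exp (-φ x) + ψ x * (Real.exp (-φ x) * -deriv φ x)) x :=
      (hψd x hx).mul he
    have h2 := h1.mul (hφ'd x hx)
    refine h2.congr_deriv ?_
    have hψx : ψ x ≠ 0 := (hψ x hx).ne'
    have hode' := hode x hx
    have hode₂ : deriv (deriv φ) x * ψ x + deriv ψ x * deriv φ x
        - (deriv φ x) ^ 2 * ψ x = -C₀ * ψ x := by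
      field_simp at hode'
      linarith [hode']
    simp only [hGdef]
    linear_combination (Real.exp (-φ x)) * hode₂
  have hFcont : ContinuousOn F (Ioi 0) :=
    (hψsmooth.continuousOn.mul (Real.continuous_exp.comp_continuousOn hφcont.neg)).mul
      hφ'cd.continuousOn
  have hFdiff : DifferentiableOn ℝ F (interior (Ioi (0:ℝ))) := by
    rw [interior_Ioi]
    exact fun z hz => ((hF z hz).differentiableAt).differentiableWithinAt
  -- existence of an interior maximum point x₀
  obtain ⟨δ, hδ1, hδ2⟩ : ∃ δ ∈ Ioi (0:ℝ), Ioo (0:ℝ) δ ⊆ {y | φ y < φ 1} :=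
    mem_nhdsGT_iff_exists_Ioo_subset.1 (h0.eventually (eventually_lt_atBot (φ 1)))
  obtain ⟨M, hM⟩ : ∃ M, ∀ y ≥ M, φ y < φ 1 :=
    eventually_atTop.1 (hinf.eventually (eventually_lt_atBot (φ 1)))
  set c : ℝ := min (δ/2) (1/2) with hc
  set b : ℝ := max M 2 with hb
  have hcpos : 0 < c := lt_min (by linarith [mem_Ioi.1 hδ1]) (by norm_num)
  have hcδ : c < δ := lt_of_le_of_lt (min_le_left _ _) (by linarith [mem_Ioi.1 hδ1])
  have hc1 : c < 1 := lt_of_le_of_lt (min_le_right _ _) (by norm_num)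
  have h1b : (1:ℝ) < b := lt_of_lt_of_le (by norm_num) (le_max_right _ _)
  have hIcc : Icc c b ⊆ Ioi (0:ℝ) := fun y hy => lt_of_lt_of_le hcpos hy.1
  obtain ⟨x₀, hx₀mem, hx₀max⟩ :=
    (isCompact_Icc (a := c) (b := b)).exists_isMaxOn ⟨1, hc1.le, h1b.le⟩ (hφcont.mono hIcc)
  have hφc : φ c < φ 1 := hδ2 ⟨hcpos, hcδ⟩
  have hφb : φ b < φ 1 := hM b (le_max_left _ _)
  have h1x₀ : φ 1 ≤ φ x₀ := hx₀max ⟨hc1.le, h1b.le⟩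
  have hx₀Ioo : x₀ ∈ Ioo c b := by
    rcases lt_or_eq_of_le hx₀mem.1 with h | h
    · rcases lt_or_eq_of_le hx₀mem.2 with h' | h'
      · exact ⟨h, h'⟩
      · exact absurd (h' ▸ h1x₀) (by linarith)
    · exact absurd (h ▸ h1x₀) (by linarith)
  have hx₀pos : (0:ℝ) < x₀ := lt_trans hcpos hx₀Ioo.1
  have hx₀crit : deriv φ x₀ = 0 :=
    (hx₀max.isLocalMax (Icc_mem_nhds hx₀Ioo.1 hx₀Ioo.2)).deriv_eq_zero
  have hFx₀ : F x₀ = 0 := by simp [hFdef, hx₀crit]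
  -- C₀ > 0
  have hC₀ : 0 < C₀ := by
    by_contra hC
    push_neg at hC
    have hFmono : MonotoneOn F (Ioi 0) := by
      refine monotoneOn_of_deriv_nonneg (convex_Ioi 0) hFcont hFdiff ?_
      intro z hz
      rw [interior_Ioi] at hz
      rw [(hF z hz).deriv]
      exact mul_nonneg (by linarith) (hGpos z hz).le
    have hanti : AntitoneOn φ (Ioc 0 x₀) := by
      refine antitoneOn_of_deriv_nonpos (convex_Ioc 0 x₀) (hφcont.mono Ioc_subset_Ioi_self) ?_ ?_
      · rw [interior_Ioc]
        intro z hz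
        exact ((hφd z hz.1).differentiableAt).differentiableWithinAt
      · intro z hz
        rw [interior_Ioc] at hz
        have hzIoi : z ∈ Ioi (0:ℝ) := hz.1
        have hFz : F z ≤ 0 := by
          have := hFmono hzIoi (mem_Ioi.2 hx₀pos) hz.2.le
          linarith [hFx₀]
        have hg := hGpos z hzIoi
        simp only [hFdef] at hFz
        simp only [hGdef] at hg
        nlinarith [hFz, hg]
    have h1 : ∀ᶠ y in nhdsWithin 0 (Ioi 0), φ y < φ x₀ :=
      h0.eventually (eventually_lt_atBot (φ x₀))
    have h2 : ∀ᶠ y in nhdsWithin 0 (Ioi 0), y < x₀ :=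
      mem_nhdsWithin_of_mem_nhds (Iio_mem_nhds hx₀pos)
    have h3 : ∀ᶠ y in nhdsWithin 0 (Ioi 0), y ∈ Ioi (0:ℝ) := self_mem_nhdsWithin
    obtain ⟨y, hy1, hy2, hy3⟩ := (h1.and (h2.and h3)).exists
    have := hanti ⟨hy3, hy2.le⟩ ⟨hx₀pos, le_rfl⟩ hy2.le
    linarith
  -- F strictly decreasing
  have hFanti : StrictAntiOn F (Ioi 0) := by
    refine strictAntiOn_of_deriv_neg (convex_Ioi 0) hFcont ?_
    intro z hz
    rw [interior_Ioi] at hz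
    rw [(hF z hz).deriv]
    exact mul_neg_of_neg_of_pos (by linarith) (hGpos z hz)
  -- key: a critical point is a global strict max on (0,∞)
  have hkey : ∀ x ∈ Ioi (0:ℝ), deriv φ x = 0 → ∀ y ∈ Ioi (0:ℝ), y ≠ x → φ y < φ x := by
    intro x hx hcrit y hy hyx
    have hFx : F x = 0 := by simp [hFdef, hcrit]
    rcases lt_or_gt_of_ne hyx with hlt | hgt
    · have hmono : StrictMonoOn φ (Ioc 0 x) := by
        refine strictMonoOn_of_deriv_pos (convex_Ioc 0 x) (hφcont.mono Ioc_subset_Ioi_self) ?_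
        intro z hz
        rw [interior_Ioc] at hz
        have hzIoi : z ∈ Ioi (0:ℝ) := hz.1
        have hFz : 0 < F z := by
          have := hFanti hzIoi hx hz.2
          linarith [hFx]
        have hg := hGpos z hzIoi
        simp only [hFdef] at hFz
        simp only [hGdef] at hg
        nlinarith [hFz, hg]
      exact hmono ⟨hy, hlt.le⟩ ⟨mem_Ioi.1 hx, le_rfl⟩ hlt
    · have hanti : StrictAntiOn φ (Ici x) := by
        refine strictAntiOn_of_deriv_neg (convex_Ici x)
          (hφcont.mono fun z hz => lt_of_lt_of_le (mem_Ioi.1 hx) hz) ?_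
        intro z hz
        rw [interior_Ici] at hz
        have hzIoi : z ∈ Ioi (0:ℝ) := lt_trans (mem_Ioi.1 hx) hz
        have hFz : F z < 0 := by
          have := hFanti hx hzIoi hz
          linarith [hFx]
        have hg := hGpos z hzIoi
        simp only [hFdef] at hFz
        simp only [hGdef] at hg
        nlinarith [hFz, hg]
      exact hanti (mem_Ici.2 le_rfl) (mem_Ici.2 (le_of_lt hgt)) hgt
  refine ⟨hC₀, ?_, ?_⟩
  · intro x hx hcrit
    have hev1 : ∀ᶠ y in nhdsWithin x {x}ᶜ, y ∈ Ioi (0:ℝ) :=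
      mem_nhdsWithin_of_mem_nhds (hSopen.mem_nhds hx)
    have hev2 : ∀ᶠ y in nhdsWithin x {x}ᶜ, y ∈ ({x}ᶜ : Set ℝ) := self_mem_nhdsWithin
    filter_upwards [hev1, hev2] with y hy1 hy2
    exact hkey x hx hcrit y hy1 hy2
  · refine ⟨x₀, ⟨mem_Ioi.2 hx₀pos, hx₀crit⟩, ?_⟩
    rintro y ⟨hy, hycrit⟩
    by_contra hne
    have h1 := hkey x₀ (mem_Ioi.2 hx₀pos) hx₀crit y hy hne
    have h2 := hkey y hy hycrit x₀ (mem_Ioi.2 hx₀pos) (Ne.symm hne)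
    linarith
end

section
/- Under the change of variables ζ = χ̃/χ - 1, ξ = ψ̃/ψ - 1, and η = (ζ+1)²/(ξ+1)^{2n} - 1, the evolution equation for ζ derived from the spherically symmetric Ricci flow transforms so that the evolution equation for η contains no second-order spatial derivative of ξ; explicitly, ∂_t η = -2n(n-1)[ (ψ_s²/ψ²)((ξ+1)^{-2n} - 1) + 2(ψ_s/ψ) ξ_s (ξ+1)^{-(2n+1)} + (1-(ξ+1)^{-2})/ψ² + ξ_s²(ξ+1)^{-(2n+2)} ] - 2n(n-1)((1-(ξ+1)^{-2})/ψ²) η + 2n(n-1)(ψ_s²/ψ²) η. -/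
/-!
Writing `η + 1 = (ζ+1)² / (ξ+1)^{2n}`, one has `∂_t η = (η + 1) (2 ∂_t ζ/(ζ+1) - 2n ∂_t ξ/(ξ+1))`.
In this logarithmic derivative the `ξ_{ss}` terms of the two equations enter as
`2n ξ_{ss}/((ζ+1)²(ξ+1))` with opposite signs and cancel, as do all terms in `Q` and in `ζ_s`;
what is left is `-2n(n-1)` times an expression in `P`, `Rc` and `ξ_s` alone.
-/

/-- `ζ_t` in the variables `a = ζ+1`, `b = ξ+1`, `p = P`, `q = Q`, `u = ζ_s`, `v = ξ_s`,
`w = ξ_{ss}`. -/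
noncomputable def zetaRate (N a b p q u v w : ℝ) : ℝ :=
  N * q * (1 / a - a) + 2 * N * p * v / (a * b) + N * w / (a * b)
    - N * p * u / a ^ 2 - N * u * v / (a ^ 2 * b)

/-- `ξ_t` in the variables of `zetaRate`, with `r = Rc`. -/
noncomputable def xiRate (N a b p q r u v w : ℝ) : ℝ :=
  (q + (N - 1) * p ^ 2) * (b / a ^ 2 - b) + (N - 1) * r * (b - 1 / b)
    + 2 * N * p * v / a ^ 2 + w / a ^ 2 + (N - 1) * v ^ 2 / (a ^ 2 * b)
    - p * u * b / a ^ 3 - u * v / a ^ 3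

theorem two_mul_zetaRate_div_sub_xiRate_div (N a b p q r u v w : ℝ) (ha : a ≠ 0) (hb : b ≠ 0) :
    2 * zetaRate N a b p q u v w / a - 2 * N * xiRate N a b p q r u v w / b
      = -2 * N * (N - 1)
          * (p ^ 2 * (1 / a ^ 2 - 1) + 2 * p * v / (a ^ 2 * b) + r * (1 - 1 / b ^ 2)
            + v ^ 2 / (a ^ 2 * b ^ 2)) := by
  unfold zetaRate xiRate
  field_simp
  ring

theorem HasDerivAt.sq_div_pow {f g : ℝ → ℝ} {f' g' t : ℝ} (k : ℕ)
    (hf : HasDerivAt f f' t) (hg : HasDerivAt g g' t) (hft : f t ≠ 0) (hgt : g t ≠ 0) :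
    HasDerivAt (fun τ => f τ ^ 2 / g τ ^ k)
      (f t ^ 2 / g t ^ k * (2 * f' / f t - k * g' / g t)) t := by
  refine ((hf.fun_pow 2).fun_div (hg.fun_pow k) (pow_ne_zero k hgt)).congr_deriv ?_
  rcases k with _ | k
  · simp [field]
  · field_simp
    push_cast
    ring

theorem eta_rate_eq (N a b c p r v : ℝ) (ha : a ≠ 0) (hb : b ≠ 0) (hc : c ≠ 0) :
    a ^ 2 / c * (-2 * N * (N - 1)
        * (p ^ 2 * (1 / a ^ 2 - 1) + 2 * p * v / (a ^ 2 * b) + r * (1 - 1 / b ^ 2)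
          + v ^ 2 / (a ^ 2 * b ^ 2)))
      = -2 * N * (N - 1)
          * (p ^ 2 * (1 / c - 1) + 2 * p * v / (c * b) + r * (1 - 1 / b ^ 2)
            + v ^ 2 / (c * b ^ 2))
        - 2 * N * (N - 1) * r * (1 - 1 / b ^ 2) * (a ^ 2 / c - 1)
        + 2 * N * (N - 1) * p ^ 2 * (a ^ 2 / c - 1) := by
  field_simp
  ring

theorem eta_equation_no_second_derivative_general
    (n : ℕ)
    (ζ ξ P Q Rc ζs ξs ξss : ℝ → ℝ → ℝ)
    (hζ : ∀ s t, 0 < ζ s t + 1)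
    (hξ : ∀ s t, 0 < ξ s t + 1)
    (hζt : ∀ s t, HasDerivAt (fun τ => ζ s τ)
        ((n : ℝ) * Q s t * (1 / (ζ s t + 1) - (ζ s t + 1))
          + 2 * (n : ℝ) * P s t * ξs s t / ((ζ s t + 1) * (ξ s t + 1))
          + (n : ℝ) * ξss s t / ((ζ s t + 1) * (ξ s t + 1))
          - (n : ℝ) * P s t * ζs s t / (ζ s t + 1) ^ 2
          - (n : ℝ) * ζs s t * ξs s t / ((ζ s t + 1) ^ 2 * (ξ s t + 1))) t)
    (hξt : ∀ s t, HasDerivAt (fun τ => ξ s τ)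
        ((Q s t + ((n : ℝ) - 1) * (P s t) ^ 2)
            * ((ξ s t + 1) / (ζ s t + 1) ^ 2 - (ξ s t + 1))
          + ((n : ℝ) - 1) * Rc s t * ((ξ s t + 1) - 1 / (ξ s t + 1))
          + 2 * (n : ℝ) * P s t * ξs s t / (ζ s t + 1) ^ 2
          + ξss s t / (ζ s t + 1) ^ 2
          + ((n : ℝ) - 1) * (ξs s t) ^ 2 / ((ζ s t + 1) ^ 2 * (ξ s t + 1))
          - P s t * ζs s t * (ξ s t + 1) / (ζ s t + 1) ^ 3
          - ζs s t * ξs s t / (ζ s t + 1) ^ 3) t) :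
    ∀ s t, HasDerivAt
        (fun τ => (ζ s τ + 1) ^ 2 / (ξ s τ + 1) ^ (2 * n) - 1)
        (-2 * (n : ℝ) * ((n : ℝ) - 1)
            * ((P s t) ^ 2 * (1 / (ξ s t + 1) ^ (2 * n) - 1)
              + 2 * P s t * ξs s t / (ξ s t + 1) ^ (2 * n + 1)
              + Rc s t * (1 - 1 / (ξ s t + 1) ^ 2)
              + (ξs s t) ^ 2 / (ξ s t + 1) ^ (2 * n + 2))
          - 2 * (n : ℝ) * ((n : ℝ) - 1) * Rc s t * (1 - 1 / (ξ s t + 1) ^ 2)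
              * ((ζ s t + 1) ^ 2 / (ξ s t + 1) ^ (2 * n) - 1)
          + 2 * (n : ℝ) * ((n : ℝ) - 1) * (P s t) ^ 2
              * ((ζ s t + 1) ^ 2 / (ξ s t + 1) ^ (2 * n) - 1)) t := by
  intro s t
  have hζt' : HasDerivAt (fun τ => ζ s τ + 1)
      (zetaRate n (ζ s t + 1) (ξ s t + 1) (P s t) (Q s t) (ζs s t) (ξs s t) (ξss s t)) t :=
    (hζt s t).add_const 1
  have hξt' : HasDerivAt (fun τ => ξ s τ + 1)
      (xiRate n (ζ s t + 1) (ξ s t + 1) (P s t) (Q s t) (Rc s t) (ζs s t) (ξs s t) (ξss s t)) t :=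
    (hξt s t).add_const 1
  have ha := (hζ s t).ne'
  have hb := (hξ s t).ne'
  refine ((hζt'.sq_div_pow (2 * n) hξt' ha hb).sub_const 1).congr_deriv ?_
  push_cast
  rw [two_mul_zetaRate_div_sub_xiRate_div _ _ _ _ _ _ _ _ _ ha hb, pow_succ _ (2 * n),
    pow_add _ (2 * n) 2, eta_rate_eq _ _ _ _ _ _ _ ha hb (pow_ne_zero _ hb)]

/-- **The `η`-equation contains no second spatial derivative of `ξ`.**  Let `ψ(s,t)` be
the (positive) spherical component of the background evolving soliton, and write
`P = ψ_s/ψ`, `Q = ψ_{ss}/ψ`, `Rc = 1/ψ²`.  Suppose `ζ, ξ` (with `ζ+1 > 0`, `ξ+1 > 0`)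
satisfy the transformed spherically symmetric Ricci flow system: for all `s, t`,

`∂_t ζ = nQ(1/(ζ+1) - (ζ+1)) + 2nP ξ_s/((ζ+1)(ξ+1)) + n ξ_{ss}/((ζ+1)(ξ+1))
  - nP ζ_s/(ζ+1)² - n ζ_s ξ_s/((ζ+1)²(ξ+1))`,

`∂_t ξ = (Q + (n-1)P²)((ξ+1)/(ζ+1)² - (ξ+1)) + (n-1)Rc((ξ+1) - 1/(ξ+1))
  + 2nP ξ_s/(ζ+1)² + ξ_{ss}/(ζ+1)² + (n-1)ξ_s²/((ζ+1)²(ξ+1))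
  - P ζ_s(ξ+1)/(ζ+1)³ - ζ_s ξ_s/(ζ+1)³`.

Then `η := (ζ+1)²/(ξ+1)^{2n} - 1` satisfies

`∂_t η = -2n(n-1)[P²((ξ+1)^{-2n} - 1) + 2P ξ_s (ξ+1)^{-(2n+1)} + Rc(1-(ξ+1)^{-2})
  + ξ_s²(ξ+1)^{-(2n+2)}] - 2n(n-1)Rc(1-(ξ+1)^{-2})η + 2n(n-1)P²η`,

which involves no `ξ_{ss}`. -/
theorem eta_equation_no_second_derivative
    (n : ℕ) (hn : 2 ≤ n)
    (ψ ζ ξ P Q Rc ζs ξs ξss : ℝ → ℝ → ℝ)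
    (hψ : ∀ s t, 0 < ψ s t)
    (hζ : ∀ s t, 0 < ζ s t + 1)
    (hξ : ∀ s t, 0 < ξ s t + 1)
    (hP : ∀ s t, P s t = deriv (fun u => ψ u t) s / ψ s t)
    (hQ : ∀ s t, Q s t = deriv (fun u => deriv (fun v => ψ v t) u) s / ψ s t)
    (hRc : ∀ s t, Rc s t = 1 / (ψ s t) ^ 2)
    (hζs : ∀ s t, ζs s t = deriv (fun u => ζ u t) s)
    (hξs : ∀ s t, ξs s t = deriv (fun u => ξ u t) s)
    (hξss : ∀ s t, ξss s t = deriv (fun u => deriv (fun v => ξ v t) u) s)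
    (hζt : ∀ s t, HasDerivAt (fun τ => ζ s τ)
        ((n : ℝ) * Q s t * (1 / (ζ s t + 1) - (ζ s t + 1))
          + 2 * (n : ℝ) * P s t * ξs s t / ((ζ s t + 1) * (ξ s t + 1))
          + (n : ℝ) * ξss s t / ((ζ s t + 1) * (ξ s t + 1))
          - (n : ℝ) * P s t * ζs s t / (ζ s t + 1) ^ 2
          - (n : ℝ) * ζs s t * ξs s t / ((ζ s t + 1) ^ 2 * (ξ s t + 1))) t)
    (hξt : ∀ s t, HasDerivAt (fun τ => ξ s τ)
        ((Q s t + ((n : ℝ) - 1) * (P s t) ^ 2)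
            * ((ξ s t + 1) / (ζ s t + 1) ^ 2 - (ξ s t + 1))
          + ((n : ℝ) - 1) * Rc s t * ((ξ s t + 1) - 1 / (ξ s t + 1))
          + 2 * (n : ℝ) * P s t * ξs s t / (ζ s t + 1) ^ 2
          + ξss s t / (ζ s t + 1) ^ 2
          + ((n : ℝ) - 1) * (ξs s t) ^ 2 / ((ζ s t + 1) ^ 2 * (ξ s t + 1))
          - P s t * ζs s t * (ξ s t + 1) / (ζ s t + 1) ^ 3
          - ζs s t * ξs s t / (ζ s t + 1) ^ 3) t) :
    ∀ s t, HasDerivAt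
        (fun τ => (ζ s τ + 1) ^ 2 / (ξ s τ + 1) ^ (2 * n) - 1)
        (-2 * (n : ℝ) * ((n : ℝ) - 1)
            * ((P s t) ^ 2 * (1 / (ξ s t + 1) ^ (2 * n) - 1)
              + 2 * P s t * ξs s t / (ξ s t + 1) ^ (2 * n + 1)
              + Rc s t * (1 - 1 / (ξ s t + 1) ^ 2)
              + (ξs s t) ^ 2 / (ξ s t + 1) ^ (2 * n + 2))
          - 2 * (n : ℝ) * ((n : ℝ) - 1) * Rc s t * (1 - 1 / (ξ s t + 1) ^ 2)
              * ((ζ s t + 1) ^ 2 / (ξ s t + 1) ^ (2 * n) - 1)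
          + 2 * (n : ℝ) * ((n : ℝ) - 1) * (P s t) ^ 2
              * ((ζ s t + 1) ^ 2 / (ξ s t + 1) ^ (2 * n) - 1)) t :=
  eta_equation_no_second_derivative_general n ζ ξ P Q Rc ζs ξs ξss hζ hξ hζt hξt
end

section
/- Extended Gronwall lemma: let f : [a,b] → ℝ be continuous with (1/2) f(t)² ≤ (1/2) f₀² + ∫_a^t Ψ(τ) f(τ) dτ for all t ∈ [a,b], where f₀ ∈ ℝ and Ψ ≥ 0 is continuous. Then (1/2)|f(t)| ≤ (1/2)|f₀| + ∫_a^t Ψ(τ) dτ for all t ∈ [a,b]. -/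
/-!
For `ε > 0` put `u(s) = f₀² + ε + 2 ∫_a^s Ψ f`. The hypothesis says `f² + ε ≤ u`, so `u > 0` and
`u' = 2 Ψ f ≤ 2 Ψ |f| ≤ 2 Ψ √u`, i.e. `(√u)' ≤ Ψ`. Integrating gives
`|f(t)| ≤ √u(t) ≤ √(f₀² + ε) + ∫_a^t Ψ`, and `ε → 0` yields `|f(t)| ≤ |f₀| + ∫_a^t Ψ`.
-/

open Set MeasureTheory intervalIntegral

theorem ContinuousOn.hasDerivAt_integral_of_mem_Ioo {g : ℝ → ℝ} {a b x : ℝ}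
    (hg : ContinuousOn g (Icc a b)) (hx : x ∈ Ioo a b) :
    HasDerivAt (fun y => ∫ τ in a..y, g τ) (g x) x :=
  integral_hasDerivAt_right
    ((hg.mono (uIcc_of_le hx.1.le ▸ Icc_subset_Icc_right hx.2.le)).intervalIntegrable)
    ((hg.mono Ioo_subset_Icc_self).stronglyMeasurableAtFilter isOpen_Ioo x hx)
    (hg.continuousAt (Icc_mem_nhds hx.1 hx.2))

theorem Real.sqrt_sub_sqrt_le_integral_of_deriv_le {u u' φ : ℝ → ℝ} {a b : ℝ} (hab : a ≤ b)
    (hu : ContinuousOn u (Icc a b)) (hpos : ∀ x ∈ Ioo a b, 0 < u x)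
    (hderiv : ∀ x ∈ Ioo a b, HasDerivAt u (u' x) x) (hφ : IntegrableOn φ (Icc a b))
    (hle : ∀ x ∈ Ioo a b, u' x ≤ 2 * φ x * √(u x)) :
    √(u b) - √(u a) ≤ ∫ x in a..b, φ x := by
  refine sub_le_integral_of_hasDeriv_right_of_le hab hu.sqrt
    (fun x hx => ((hderiv x hx).sqrt (hpos x hx).ne').hasDerivWithinAt) hφ fun x hx => ?_
  have hsqrt : 0 < √(u x) := Real.sqrt_pos.2 (hpos x hx)
  rw [div_le_iff₀ (by positivity)]
  linarith [hle x hx]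

theorem abs_le_sqrt_add_integral_of_sq_le {f Ψ : ℝ → ℝ} {a b f₀ ε : ℝ} (hab : a ≤ b)
    (hε : 0 < ε) (hf : ContinuousOn f (Icc a b)) (hΨ : ContinuousOn Ψ (Icc a b))
    (hΨ0 : ∀ t ∈ Icc a b, 0 ≤ Ψ t)
    (h : ∀ t ∈ Icc a b, f t ^ 2 ≤ f₀ ^ 2 + 2 * ∫ τ in a..t, Ψ τ * f τ) :
    |f b| ≤ √(f₀ ^ 2 + ε) + ∫ τ in a..b, Ψ τ := by
  set u : ℝ → ℝ := fun s => f₀ ^ 2 + ε + 2 * ∫ τ in a..s, Ψ τ * f τ with hu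
  have hΨf : ContinuousOn (fun τ => Ψ τ * f τ) (Icc a b) := hΨ.mul hf
  have hsq_lt : ∀ s ∈ Icc a b, f s ^ 2 < u s := fun s hs => by linarith [h s hs]
  have hpos : ∀ s ∈ Icc a b, 0 < u s := fun s hs => (sq_nonneg _).trans_lt (hsq_lt s hs)
  have hcont : ContinuousOn u (Icc a b) := by
    have hint : IntegrableOn (fun τ => Ψ τ * f τ) (uIcc a b) := by
      rw [uIcc_of_le hab]
      exact hΨf.integrableOn_Icc
    have hprim := continuousOn_primitive_interval hint
    rw [uIcc_of_le hab] at hprim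
    exact (hprim.const_smul (2 : ℝ)).const_add _
  have hderiv : ∀ s ∈ Ioo a b, HasDerivAt u (2 * (Ψ s * f s)) s := fun s hs =>
    ((hΨf.hasDerivAt_integral_of_mem_Ioo hs).const_mul 2).const_add _
  have hbound : ∀ s ∈ Ioo a b, 2 * (Ψ s * f s) ≤ 2 * Ψ s * √(u s) := fun s hs => by
    have hfs : f s ≤ √(u s) := Real.le_sqrt_of_sq_le (hsq_lt s (Ioo_subset_Icc_self hs)).le
    nlinarith [hΨ0 s (Ioo_subset_Icc_self hs)]
  have hua : u a = f₀ ^ 2 + ε := by simp [hu]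
  have key := Real.sqrt_sub_sqrt_le_integral_of_deriv_le hab hcont
    (fun s hs => hpos s (Ioo_subset_Icc_self hs)) hderiv (hΨ.integrableOn_compact isCompact_Icc)
    hbound
  rw [hua] at key
  have hfb : |f b| ≤ √(u b) := Real.abs_le_sqrt (hsq_lt b (right_mem_Icc.2 hab)).le
  linarith

theorem abs_le_abs_add_integral_of_sq_le {f Ψ : ℝ → ℝ} {a b f₀ : ℝ} (hab : a ≤ b)
    (hf : ContinuousOn f (Icc a b)) (hΨ : ContinuousOn Ψ (Icc a b))
    (hΨ0 : ∀ t ∈ Icc a b, 0 ≤ Ψ t)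
    (h : ∀ t ∈ Icc a b, f t ^ 2 ≤ f₀ ^ 2 + 2 * ∫ τ in a..t, Ψ τ * f τ) :
    |f b| ≤ |f₀| + ∫ τ in a..b, Ψ τ := by
  refine le_of_forall_pos_le_add fun δ hδ => ?_
  have hsqrt : √(f₀ ^ 2 + δ ^ 2) ≤ |f₀| + δ :=
    (Real.sqrt_le_left (by positivity)).2 (by nlinarith [sq_abs f₀, abs_nonneg f₀])
  linarith [abs_le_sqrt_add_integral_of_sq_le hab (pow_pos hδ 2) hf hΨ hΨ0 h]

theorem extended_gronwall_general
    (a b : ℝ) (f Ψ : ℝ → ℝ) (f₀ : ℝ)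
    (hf : ContinuousOn f (Icc a b))
    (hΨ : ContinuousOn Ψ (Icc a b))
    (hΨ0 : ∀ t ∈ Icc a b, 0 ≤ Ψ t)
    (h : ∀ t ∈ Icc a b,
        (1 / 2) * (f t) ^ 2 ≤ (1 / 2) * f₀ ^ 2 + ∫ τ in a..t, Ψ τ * f τ) :
    ∀ t ∈ Icc a b, (1 / 2) * |f t| ≤ (1 / 2) * |f₀| + ∫ τ in a..t, Ψ τ := by
  intro t ht
  have hsub : Icc a t ⊆ Icc a b := Icc_subset_Icc_right ht.2
  have hbound := abs_le_abs_add_integral_of_sq_le ht.1 (hf.mono hsub) (hΨ.mono hsub)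
    (fun s hs => hΨ0 s (hsub hs)) fun s hs => by linarith [h s (hsub hs)]
  have hint : 0 ≤ ∫ τ in a..t, Ψ τ := integral_nonneg ht.1 fun s hs => hΨ0 s (hsub hs)
  linarith

/-- **Extended Gronwall lemma.**  Let `f : [a,b] → ℝ` be continuous with
`(1/2) f(t)² ≤ (1/2) f₀² + ∫_a^t Ψ(τ) f(τ) dτ` for all `t ∈ [a,b]`, where `Ψ ≥ 0` is
continuous.  Then `(1/2)|f(t)| ≤ (1/2)|f₀| + ∫_a^t Ψ(τ) dτ` for all `t ∈ [a,b]`. -/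
theorem extended_gronwall
    (a b : ℝ) (hab : a ≤ b) (f Ψ : ℝ → ℝ) (f₀ : ℝ)
    (hf : ContinuousOn f (Icc a b))
    (hΨ : ContinuousOn Ψ (Icc a b))
    (hΨ0 : ∀ t ∈ Icc a b, 0 ≤ Ψ t)
    (h : ∀ t ∈ Icc a b,
        (1 / 2) * (f t) ^ 2 ≤ (1 / 2) * f₀ ^ 2 + ∫ τ in a..t, Ψ τ * f τ) :
    ∀ t ∈ Icc a b, (1 / 2) * |f t| ≤ (1 / 2) * |f₀| + ∫ τ in a..t, Ψ τ :=
  extended_gronwall_general a b f Ψ f₀ hf hΨ hΨ0 h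
end
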